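/- arXiv:1705.07664 — 4 statements merged into one kernel-verified Lean document; each statement's English description precedes it below -/
import Mathlib

section
/- Let Δ_u be the unnormalized Laplacian of an undirected weighted graph with maximal degree d = max_i d_i, and let h > 0. Then the Jacobi iteration matrix of hΔ_u + iI is J = (hD + iI)^{−1} h W, and its maximum-row-sum norm is ‖J‖_∞ = hd/√(h²d² + 1) < 1. -/
open Matrix Complex Finset

noncomputable section

/-- Degree of vertex `i`: sum of weights of edges incident to `i`. -/
def gDegree {n : ℕ} (W : Matrix (Fin n) (Fin n) ℝ) (i : Fin n) : ℝ :=
  ∑ j ∈ Finset.univ.erase i, W i j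

/-- Unnormalized graph Laplacian `Δ_u = D − W`. -/
def unLaplacian {n : ℕ} (W : Matrix (Fin n) (Fin n) ℝ) : Matrix (Fin n) (Fin n) ℝ :=
  Matrix.diagonal (gDegree W) - W

/-- Normalized graph Laplacian `Δ_n = I − D^{-1/2} W D^{-1/2}`. -/
def normLaplacian {n : ℕ} (W : Matrix (Fin n) (Fin n) ℝ) : Matrix (Fin n) (Fin n) ℝ :=
  1 - Matrix.diagonal (fun i => (Real.sqrt (gDegree W i))⁻¹) * W *
      Matrix.diagonal (fun i => (Real.sqrt (gDegree W i))⁻¹)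

/-- Complexification of a real matrix. -/
def cplx {n : ℕ} (Δ : Matrix (Fin n) (Fin n) ℝ) : Matrix (Fin n) (Fin n) ℂ :=
  Δ.map Complex.ofReal

/-- The matrix `hΔ − iI`. -/
def cayleyNum {n : ℕ} (Δ : Matrix (Fin n) (Fin n) ℝ) (hz : ℝ) : Matrix (Fin n) (Fin n) ℂ :=
  (hz : ℂ) • cplx Δ - Complex.I • 1

/-- The matrix `hΔ + iI`. -/
def cayleyDen {n : ℕ} (Δ : Matrix (Fin n) (Fin n) ℝ) (hz : ℝ) : Matrix (Fin n) (Fin n) ℂ :=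
  (hz : ℂ) • cplx Δ + Complex.I • 1

/-- The Cayley transform `C(hΔ) = (hΔ − iI)(hΔ + iI)⁻¹` of a scaled matrix. -/
def cayleyOp {n : ℕ} (Δ : Matrix (Fin n) (Fin n) ℝ) (hz : ℝ) : Matrix (Fin n) (Fin n) ℂ :=
  cayleyNum Δ hz * (cayleyDen Δ hz)⁻¹

/-- Cayley filter `g_{c,h}(Δ) = c₀ I + 2 Re { Σ_{j=1}^r c_j (hΔ−iI)^j (hΔ+iI)^{−j} }`
(entrywise real part). -/
def cayleyFilter {n : ℕ} (Δ : Matrix (Fin n) (Fin n) ℝ) (hz : ℝ) (r : ℕ)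
    (c₀ : ℝ) (c : ℕ → ℂ) : Matrix (Fin n) (Fin n) ℝ :=
  c₀ • (1 : Matrix (Fin n) (Fin n) ℝ) +
    (2 : ℝ) • (∑ j ∈ Finset.Icc 1 r,
      c j • (cayleyNum Δ hz ^ j * ((cayleyDen Δ hz)⁻¹) ^ j)).map Complex.re

/-- Euclidean (`L₂`) norm of a finite signal. -/
def l2norm {n : ℕ} {𝕜 : Type*} [RCLike 𝕜] (v : Fin n → 𝕜) : ℝ :=
  Real.sqrt (∑ i, ‖v i‖ ^ 2)

/-- Operator norm induced by the Euclidean norm. -/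
def l2opNorm {n : ℕ} (A : Matrix (Fin n) (Fin n) ℂ) : ℝ :=
  sSup {t : ℝ | ∃ x : Fin n → ℂ, l2norm x = 1 ∧ t = l2norm (A *ᵥ x)}

/-- Maximum-row-sum norm `‖A‖_∞ = max_i Σ_k |a_{ik}|`. -/
def rowSumNorm {n : ℕ} (A : Matrix (Fin n) (Fin n) ℂ) : ℝ :=
  sSup (Set.range fun i => ∑ k, ‖A i k‖)

/-- Diagonal part `Diag(A)` of a matrix. -/
def diagPart {n : ℕ} (A : Matrix (Fin n) (Fin n) ℂ) : Matrix (Fin n) (Fin n) ℂ :=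
  Matrix.diagonal fun i => A i i

/-- Off-diagonal part `Off(A) = A − Diag(A)` of a matrix. -/
def offPart {n : ℕ} (A : Matrix (Fin n) (Fin n) ℂ) : Matrix (Fin n) (Fin n) ℂ :=
  A - diagPart A

/-- Jacobi iteration matrix `J = −Diag(A)⁻¹ Off(A)`. -/
def jacobiMatrix {n : ℕ} (A : Matrix (Fin n) (Fin n) ℂ) : Matrix (Fin n) (Fin n) ℂ :=
  -((diagPart A)⁻¹ * offPart A)

/-- Jacobi iterations `x^{(k+1)} = J x^{(k)} + b`, initialized at `x^{(0)} = b`. -/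
def jacobiIter {n : ℕ} (J : Matrix (Fin n) (Fin n) ℂ) (b : Fin n → ℂ) : ℕ → (Fin n → ℂ)
  | 0 => b
  | (k+1) => J *ᵥ jacobiIter J b k + b

/-- The Jacobi approximation scheme: `ỹ₀ = f` and, for `j ≥ 1`, `ỹ_j` is the result of `K`
Jacobi iterations for the system `(hΔ+iI) y = (hΔ−iI) ỹ_{j-1}`, initialized at
`b_j = Diag(hΔ+iI)⁻¹ (hΔ−iI) ỹ_{j-1}`. -/
def jacobiScheme {n : ℕ} (Δ : Matrix (Fin n) (Fin n) ℝ) (hz : ℝ) (K : ℕ)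
    (f : Fin n → ℝ) : ℕ → (Fin n → ℂ)
  | 0 => fun i => (f i : ℂ)
  | (j+1) =>
      jacobiIter (jacobiMatrix (cayleyDen Δ hz))
        ((diagPart (cayleyDen Δ hz))⁻¹ *ᵥ (cayleyNum Δ hz *ᵥ jacobiScheme Δ hz K f j)) K

/-- The normalized Jacobi approximation scheme: as `jacobiScheme`, but each `ỹ_j` (`j ≥ 1`)
is rescaled so that `‖ỹ_j‖₂ = ‖f‖₂`. -/
def jacobiSchemeN {n : ℕ} (Δ : Matrix (Fin n) (Fin n) ℝ) (hz : ℝ) (K : ℕ)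
    (f : Fin n → ℝ) : ℕ → (Fin n → ℂ)
  | 0 => fun i => (f i : ℂ)
  | (j+1) =>
      let y := jacobiIter (jacobiMatrix (cayleyDen Δ hz))
        ((diagPart (cayleyDen Δ hz))⁻¹ *ᵥ (cayleyNum Δ hz *ᵥ jacobiSchemeN Δ hz K f j)) K
      (l2norm f / l2norm y) • y

/-- Approximate Cayley filter output `G̃f = c₀ ỹ₀ + 2 Re Σ_{j=1}^r c_j ỹ_j` (Jacobi scheme). -/
def approxCayley {n : ℕ} (Δ : Matrix (Fin n) (Fin n) ℝ) (hz : ℝ) (r : ℕ)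
    (c₀ : ℝ) (c : ℕ → ℂ) (K : ℕ) (f : Fin n → ℝ) : Fin n → ℝ :=
  fun i => c₀ * f i + 2 * (∑ j ∈ Finset.Icc 1 r, c j * jacobiScheme Δ hz K f j i).re

/-- Approximate Cayley filter output for the normalized Jacobi scheme. -/
def approxCayleyN {n : ℕ} (Δ : Matrix (Fin n) (Fin n) ℝ) (hz : ℝ) (r : ℕ)
    (c₀ : ℝ) (c : ℕ → ℂ) (K : ℕ) (f : Fin n → ℝ) : Fin n → ℝ :=
  fun i => c₀ * f i + 2 * (∑ j ∈ Finset.Icc 1 r, c j * jacobiSchemeN Δ hz K f j i).re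

/-- `k`-hop neighborhood of vertex `m` w.r.t. an adjacency relation `A`: all vertices reachable
from `m` by a path of at most `k` edges. -/
def khop {n : ℕ} (A : Fin n → Fin n → Prop) : ℕ → Fin n → Set (Fin n)
  | 0, m => {m}
  | (k+1), m => khop A k m ∪ {l | ∃ v ∈ khop A k m, A v l}

/-- Delta signal at vertex `m`. -/
def deltaSig {n : ℕ} (m : Fin n) : Fin n → ℝ :=
  fun i => if i = m then 1 else 0

/-! The diagonal of `hΔ_u + iI` is `hD + iI` and its off-diagonal part is `-hW`, so row `i` of the
Jacobi matrix is `h W_{i·} / (h d_i + i)`, with absolute row sum `h d_i / √(h² d_i² + 1)`. As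
`x ↦ x / √(x² + 1)` is increasing and bounded by `1`, the largest row sum is the one of a vertex
of maximal degree. -/

theorem strictMono_div_sqrt_sq_add_one : StrictMono fun x : ℝ => x / √(x ^ 2 + 1) := by
  refine strictMono_of_odd_strictMonoOn_nonneg (fun x => by simp [neg_div]) fun x hx y _ hxy => ?_
  have hy : 0 ≤ y := le_trans hx hxy.le
  rw [div_lt_div_iff₀ (by positivity) (by positivity)]
  -- both sides are nonnegative and their squares differ by `y ^ 2 - x ^ 2`
  refine lt_of_pow_lt_pow_left₀ 2 (by positivity) ?_
  rw [mul_pow, mul_pow, Real.sq_sqrt (by positivity), Real.sq_sqrt (by positivity)]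
  nlinarith [mul_self_lt_mul_self hx hxy]

theorem div_sqrt_sq_add_one_lt_one (x : ℝ) : x / √(x ^ 2 + 1) < 1 := by
  rw [div_lt_one (by positivity)]
  calc x ≤ |x| := le_abs_self x
    _ = √(x ^ 2) := (Real.sqrt_sq_eq_abs x).symm
    _ < √(x ^ 2 + 1) := Real.sqrt_lt_sqrt (sq_nonneg x) (lt_add_one _)

theorem Complex.norm_ofReal_add_I (x : ℝ) : ‖(x : ℂ) + I‖ = √(x ^ 2 + 1) := by
  simpa using Complex.norm_add_mul_I x 1

theorem Complex.ofReal_add_I_ne_zero (x : ℝ) : (x : ℂ) + I ≠ 0 := fun h => by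
  simpa using congrArg Complex.im h

theorem Matrix.inv_diagonal_of_ne_zero {ι K : Type*} [Fintype ι] [DecidableEq ι] [Field K]
    {v : ι → K} (hv : ∀ i, v i ≠ 0) : (diagonal v)⁻¹ = diagonal v⁻¹ :=
  inv_eq_right_inv <| by
    rw [diagonal_mul_diagonal, ← diagonal_one]
    exact congrArg diagonal (funext fun i => mul_inv_cancel₀ (hv i))

theorem Matrix.sum_norm_inv_diagonal_mul_apply {ι 𝕜 : Type*} [Fintype ι] [DecidableEq ι]
    [NormedField 𝕜] {v : ι → 𝕜} (hv : ∀ i, v i ≠ 0) (B : Matrix ι ι 𝕜) (i : ι) :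
    ∑ k, ‖((diagonal v)⁻¹ * B) i k‖ = (∑ k, ‖B i k‖) / ‖v i‖ := by
  simp only [inv_diagonal_of_ne_zero hv, diagonal_mul, Pi.inv_apply, inv_mul_eq_div, norm_div,
    Finset.sum_div]

section Jacobi

variable {n : ℕ} {v : Fin n → ℂ} {B : Matrix (Fin n) (Fin n) ℂ}

theorem diagPart_diagonal_sub (hB : ∀ i, B i i = 0) :
    diagPart (diagonal v - B) = diagonal v := by
  ext i j
  by_cases h : i = j
  · subst h
    simp [diagPart, hB]
  · simp [diagPart, h]

theorem jacobiMatrix_diagonal_sub (hB : ∀ i, B i i = 0) :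
    jacobiMatrix (diagonal v - B) = (diagonal v)⁻¹ * B := by
  rw [jacobiMatrix, offPart, diagPart_diagonal_sub hB, sub_sub_cancel_left, Matrix.mul_neg,
    neg_neg]

end Jacobi

section Laplacian

variable {n : ℕ} (W : Matrix (Fin n) (Fin n) ℝ) (hz : ℝ)

theorem sum_eq_gDegree (hdiag : ∀ i, W i i = 0) (i : Fin n) : ∑ k, W i k = gDegree W i := by
  rw [gDegree, Finset.sum_erase _ (hdiag i)]

theorem smul_cplx_diagonal_add_I_smul_one (g : Fin n → ℝ) :
    (hz : ℂ) • cplx (diagonal g) + I • 1 = diagonal fun i => ((hz * g i : ℝ) : ℂ) + I := by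
  ext i j
  by_cases h : i = j
  · subst h
    simp [cplx]
  · simp [cplx, h]

theorem cayleyDen_unLaplacian :
    cayleyDen (unLaplacian W) hz
      = (diagonal fun i => ((hz * gDegree W i : ℝ) : ℂ) + I) - (hz : ℂ) • cplx W := by
  rw [← smul_cplx_diagonal_add_I_smul_one, cayleyDen, unLaplacian, cplx, cplx, cplx,
    Matrix.map_sub _ Complex.ofReal_sub, smul_sub]
  abel

theorem jacobiMatrix_cayleyDen_unLaplacian (hdiag : ∀ i, W i i = 0) :
    jacobiMatrix (cayleyDen (unLaplacian W) hz)
      = (diagonal fun i => ((hz * gDegree W i : ℝ) : ℂ) + I)⁻¹ * ((hz : ℂ) • cplx W) := by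
  rw [cayleyDen_unLaplacian, jacobiMatrix_diagonal_sub]
  intro i
  simp [cplx, hdiag i]

theorem sum_norm_jacobiMatrix_cayleyDen_unLaplacian (hnn : ∀ i j, 0 ≤ W i j)
    (hdiag : ∀ i, W i i = 0) (hhz : 0 ≤ hz) (i : Fin n) :
    ∑ k, ‖jacobiMatrix (cayleyDen (unLaplacian W) hz) i k‖
      = hz * gDegree W i / √((hz * gDegree W i) ^ 2 + 1) := by
  rw [jacobiMatrix_cayleyDen_unLaplacian W hz hdiag,
    sum_norm_inv_diagonal_mul_apply (fun _ => Complex.ofReal_add_I_ne_zero _),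
    Complex.norm_ofReal_add_I, ← sum_eq_gDegree W hdiag, Finset.mul_sum]
  congr 1
  refine Finset.sum_congr rfl fun k _ => ?_
  rw [Matrix.smul_apply, cplx, map_apply, smul_eq_mul, ← Complex.ofReal_mul, Complex.norm_real,
    Real.norm_of_nonneg (mul_nonneg hhz (hnn i k))]

end Laplacian

theorem jacobiMatrix_rowSumNorm_general {n : ℕ} (W : Matrix (Fin n) (Fin n) ℝ)
    (hnn : ∀ i j, 0 ≤ W i j) (hdiag : ∀ i, W i i = 0)
    (d : ℝ) (hd : IsGreatest (Set.range (gDegree W)) d)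
    (hz : ℝ) (hhz : 0 < hz) :
    jacobiMatrix (cayleyDen (unLaplacian W) hz)
      = ((hz : ℂ) • cplx (Matrix.diagonal (gDegree W)) + Complex.I • 1)⁻¹
          * ((hz : ℂ) • cplx W) ∧
    rowSumNorm (jacobiMatrix (cayleyDen (unLaplacian W) hz))
      = hz * d / Real.sqrt ((hz * d) ^ 2 + 1) ∧
    hz * d / Real.sqrt ((hz * d) ^ 2 + 1) < 1 := by
  set φ : ℝ → ℝ := fun t => hz * t / √((hz * t) ^ 2 + 1)
  have hφ : Monotone φ :=
    strictMono_div_sqrt_sq_add_one.monotone.comp (monotone_mul_left_of_nonneg hhz.le)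
  have hrows : (fun i => ∑ k, ‖jacobiMatrix (cayleyDen (unLaplacian W) hz) i k‖)
      = φ ∘ gDegree W :=
    funext (sum_norm_jacobiMatrix_cayleyDen_unLaplacian W hz hnn hdiag hhz.le)
  refine ⟨?_, ?_, div_sqrt_sq_add_one_lt_one _⟩
  · rw [jacobiMatrix_cayleyDen_unLaplacian W hz hdiag, smul_cplx_diagonal_add_I_smul_one]
  · rw [rowSumNorm, hrows, Set.range_comp]
    exact (hφ.map_isGreatest hd).csSup_eq

/-- For a general undirected weighted graph with maximal degree `d` and
`h > 0`, the Jacobi iteration matrix of `hΔ_u + iI` is `J = (hD + iI)⁻¹ h W`, and its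
maximum-row-sum norm is `‖J‖_∞ = hd/√(h²d² + 1) < 1`. -/
theorem jacobiMatrix_rowSumNorm {n : ℕ} (W : Matrix (Fin n) (Fin n) ℝ)
    (hsym : W.IsSymm) (hnn : ∀ i j, 0 ≤ W i j) (hdiag : ∀ i, W i i = 0)
    (d : ℝ) (hd : IsGreatest (Set.range (gDegree W)) d)
    (hz : ℝ) (hhz : 0 < hz) :
    jacobiMatrix (cayleyDen (unLaplacian W) hz)
      = ((hz : ℂ) • cplx (Matrix.diagonal (gDegree W)) + Complex.I • 1)⁻¹
          * ((hz : ℂ) • cplx W) ∧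
    rowSumNorm (jacobiMatrix (cayleyDen (unLaplacian W) hz))
      = hz * d / Real.sqrt ((hz * d) ^ 2 + 1) ∧
    hz * d / Real.sqrt ((hz * d) ^ 2 + 1) < 1 :=
  jacobiMatrix_rowSumNorm_general W hnn hdiag d hd hz hhz

end
end

section
/- Let Δ be an n×n real symmetric positive-semidefinite matrix, h > 0, f ∈ ℝⁿ nonzero, and consider the Jacobi approximation scheme with K iterations. Since C(hΔ) is unitary, ‖C(hΔ)^j f‖₂ = ‖f‖₂ for all j, and the relative errors e_j = ‖C(hΔ)^j f − ỹ_j‖₂ / ‖f‖₂ satisfy, for each j = 1, …, r, the recursive bound e_j ≤ e_{j−1} + ‖J^{K+1}‖₂ (1 + e_{j−1}). -/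
open Matrix Complex Finset

noncomputable section

/-!
`C(hΔ)` is unitary: for Hermitian `A` the factors `A ∓ iI` are each other's adjoints and commute,
so `(A − iI)ᴴ(A − iI) = (A + iI)ᴴ(A + iI) = A² + I`. Hence its powers preserve `‖f‖₂`.
For the error step put `ŷ = C(hΔ) ỹ_{j−1}`, the exact solution of `(hΔ + iI) y = (hΔ − iI) ỹ_{j−1}`.
It is a fixed point of the Jacobi map `y ↦ J y + b_j`, and `b_j = ŷ − J ŷ`, so after `K` sweeps
`ỹ_j = ŷ − J^{K+1} ŷ`. Thus `C^j f − ỹ_j = C (C^{j−1} f − ỹ_{j−1}) + J^{K+1} ŷ`, and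
`‖ŷ‖₂ = ‖ỹ_{j−1}‖₂ ≤ ‖f‖₂ + ‖C^{j−1} f − ỹ_{j−1}‖₂`.
-/

section L2
variable {n : ℕ} {𝕜 : Type*} [RCLike 𝕜]

lemma l2norm_eq_norm_toLp (v : Fin n → 𝕜) :
    l2norm v = ‖WithLp.toLp 2 v‖ :=
  (EuclideanSpace.norm_eq _).symm

lemma l2norm_nonneg (v : Fin n → 𝕜) : 0 ≤ l2norm v :=
  Real.sqrt_nonneg _

lemma l2norm_add_le (x y : Fin n → 𝕜) : l2norm (x + y) ≤ l2norm x + l2norm y := by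
  simpa only [l2norm_eq_norm_toLp, WithLp.toLp_add] using norm_add_le _ _

lemma l2norm_sub_le (x y : Fin n → 𝕜) : l2norm (x - y) ≤ l2norm x + l2norm y := by
  simpa only [l2norm_eq_norm_toLp, WithLp.toLp_sub] using norm_sub_le _ _

lemma l2norm_ofReal (f : Fin n → ℝ) : l2norm (fun i => (f i : ℂ)) = l2norm f := by
  simp only [l2norm, Complex.norm_real]

lemma l2norm_eq_sqrt_re_dotProduct (v : Fin n → ℂ) : l2norm v = √(star v ⬝ᵥ v).re := by
  simp only [l2norm, dotProduct, Complex.re_sum, Pi.star_apply, Complex.star_def,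
    ← Complex.normSq_eq_conj_mul_self, Complex.ofReal_re, Complex.normSq_eq_norm_sq]

lemma l2norm_mulVec_of_mem_unitaryGroup {U : Matrix (Fin n) (Fin n) ℂ}
    (hU : U ∈ unitaryGroup (Fin n) ℂ) (v : Fin n → ℂ) : l2norm (U *ᵥ v) = l2norm v := by
  rw [l2norm_eq_sqrt_re_dotProduct, l2norm_eq_sqrt_re_dotProduct, star_mulVec,
    dotProduct_mulVec, vecMul_vecMul, ← star_eq_conjTranspose, (mem_unitaryGroup_iff').1 hU,
    vecMul_one]

lemma l2opNorm_nonneg (A : Matrix (Fin n) (Fin n) ℂ) : 0 ≤ l2opNorm A :=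
  Real.sSup_nonneg fun _ ⟨_, _, ht⟩ => ht ▸ l2norm_nonneg _

lemma l2norm_mulVec_le (A : Matrix (Fin n) (Fin n) ℂ) (v : Fin n → ℂ) :
    l2norm (A *ᵥ v) ≤ l2opNorm A * l2norm v := by
  have hbdd : BddAbove {t : ℝ | ∃ x : Fin n → ℂ, l2norm x = 1 ∧ t = l2norm (A *ᵥ x)} := by
    open scoped Matrix.Norms.L2Operator in
    refine ⟨‖A‖, fun t ⟨x, hx, ht⟩ => ?_⟩
    calc t = ‖WithLp.toLp 2 (A *ᵥ x)‖ := ht.trans (l2norm_eq_norm_toLp _)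
      _ ≤ ‖A‖ * ‖WithLp.toLp 2 x‖ := A.l2_opNorm_mulVec _
      _ = ‖A‖ := by rw [← l2norm_eq_norm_toLp, hx, mul_one]
  rcases (l2norm_nonneg v).eq_or_lt with hv | hv
  · have : v = 0 := by
      simpa [l2norm_eq_norm_toLp] using hv.symm
    simp [this, l2norm]
  · set c : ℂ := (((l2norm v)⁻¹ : ℝ) : ℂ)
    have hc : ‖c‖ = (l2norm v)⁻¹ := by simp [c, hv.le]
    have hunit : l2norm (c • v) = 1 := by
      rw [l2norm_eq_norm_toLp, WithLp.toLp_smul, norm_smul, ← l2norm_eq_norm_toLp, hc,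
        inv_mul_cancel₀ hv.ne']
    have hle := le_csSup hbdd ⟨c • v, hunit, rfl⟩
    rw [mulVec_smul, l2norm_eq_norm_toLp, WithLp.toLp_smul, norm_smul, ← l2norm_eq_norm_toLp,
      hc, inv_mul_le_iff₀ hv] at hle
    rwa [mul_comm] at hle

end L2

section Cayley
variable {ι : Type*} [DecidableEq ι] {A : Matrix ι ι ℂ}

lemma Matrix.IsHermitian.conjTranspose_sub_I_smul_one (hA : A.IsHermitian) :
    (A - I • 1)ᴴ = A + I • 1 := by
  simp [hA.eq, sub_eq_add_neg]

lemma Matrix.IsHermitian.conjTranspose_add_I_smul_one (hA : A.IsHermitian) :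
    (A + I • 1)ᴴ = A - I • 1 := by
  simp [conjTranspose_add, hA.eq, sub_eq_add_neg]

lemma Matrix.mul_self_add_one_eq_sub_I_mul_add_I [Fintype ι] (A : Matrix ι ι ℂ) :
    A * A + 1 = (A - I • 1) * (A + I • 1) := by
  rw [← ((Commute.one_right A).smul_right I).mul_self_sub_mul_self_eq']
  simp [smul_smul, sub_eq_add_neg]

lemma Matrix.mul_self_add_one_eq_add_I_mul_sub_I [Fintype ι] (A : Matrix ι ι ℂ) :
    A * A + 1 = (A + I • 1) * (A - I • 1) := by
  rw [← ((Commute.one_right A).smul_right I).mul_self_sub_mul_self_eq]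
  simp [smul_smul, sub_eq_add_neg]

open scoped ComplexOrder in
lemma Matrix.IsHermitian.isUnit_det_add_I_smul_one [Fintype ι] (hA : A.IsHermitian) :
    IsUnit (A + I • 1).det := by
  have hpos : (Aᴴ * A + 1).PosDef :=
    PosDef.posSemidef_add (posSemidef_conjTranspose_mul_self A) .one
  rw [hA.eq, mul_self_add_one_eq_sub_I_mul_add_I] at hpos
  have := (isUnit_iff_isUnit_det _).1 hpos.isUnit
  rw [det_mul] at this
  exact isUnit_of_mul_isUnit_right this

lemma Matrix.IsHermitian.cayley_mem_unitaryGroup [Fintype ι] (hA : A.IsHermitian) :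
    (A - I • 1) * (A + I • 1)⁻¹ ∈ unitaryGroup ι ℂ := by
  have hD := hA.isUnit_det_add_I_smul_one
  have hDstar : IsUnit (A + I • 1)ᴴ.det := by rw [det_conjTranspose]; exact hD.star
  rw [mem_unitaryGroup_iff', star_eq_conjTranspose, conjTranspose_mul, conjTranspose_nonsing_inv,
    Matrix.mul_assoc, ← Matrix.mul_assoc (A - I • 1)ᴴ, hA.conjTranspose_sub_I_smul_one,
    ← mul_self_add_one_eq_add_I_mul_sub_I, mul_self_add_one_eq_sub_I_mul_add_I,
    ← hA.conjTranspose_add_I_smul_one, Matrix.mul_assoc, mul_nonsing_inv _ hD, Matrix.mul_one,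
    nonsing_inv_mul _ hDstar]

lemma Matrix.IsHermitian.add_I_smul_one_mul_cayley [Fintype ι] (hA : A.IsHermitian) :
    (A + I • 1) * ((A - I • 1) * (A + I • 1)⁻¹) = A - I • 1 := by
  rw [← Matrix.mul_assoc, ← mul_self_add_one_eq_add_I_mul_sub_I,
    mul_self_add_one_eq_sub_I_mul_add_I, Matrix.mul_assoc,
    mul_nonsing_inv _ hA.isUnit_det_add_I_smul_one, Matrix.mul_one]

end Cayley

section Jacobi
variable {n : ℕ}

lemma jacobiIter_eq_sub_pow_mulVec {J : Matrix (Fin n) (Fin n) ℂ} {b x : Fin n → ℂ}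
    (hx : J *ᵥ x + b = x) (k : ℕ) : jacobiIter J b k = x - J ^ (k + 1) *ᵥ x := by
  induction k with
  | zero => rw [jacobiIter, zero_add, pow_one, eq_sub_iff_add_eq, add_comm, hx]
  | succ k ih =>
    rw [jacobiIter, ih, mulVec_sub, mulVec_mulVec, ← pow_succ', sub_add_eq_add_sub, hx]

lemma jacobiMatrix_add_inv_diagPart_mul {A : Matrix (Fin n) (Fin n) ℂ}
    (hA : IsUnit (diagPart A).det) : jacobiMatrix A + (diagPart A)⁻¹ * A = 1 := by
  rw [jacobiMatrix, offPart, Matrix.mul_sub, neg_sub, sub_add_cancel, nonsing_inv_mul _ hA]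

lemma jacobiIter_inv_diagPart_mulVec {A : Matrix (Fin n) (Fin n) ℂ}
    (hA : IsUnit (diagPart A).det) (x : Fin n → ℂ) (k : ℕ) :
    jacobiIter (jacobiMatrix A) ((diagPart A)⁻¹ *ᵥ (A *ᵥ x)) k
      = x - jacobiMatrix A ^ (k + 1) *ᵥ x :=
  jacobiIter_eq_sub_pow_mulVec
    (by rw [mulVec_mulVec, ← add_mulVec, jacobiMatrix_add_inv_diagPart_mul hA, one_mulVec]) k

end Jacobi

section CayleyJacobi
variable {n : ℕ} {Δ : Matrix (Fin n) (Fin n) ℝ} (hz : ℝ)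

lemma isHermitian_smul_cplx (hΔ : Δ.IsHermitian) : ((hz : ℂ) • cplx Δ).IsHermitian :=
  (hΔ.map _ fun x => (Complex.conj_ofReal x).symm).smul (Complex.conj_ofReal hz)

lemma cayleyOp_mem_unitaryGroup (hΔ : Δ.IsHermitian) :
    cayleyOp Δ hz ∈ unitaryGroup (Fin n) ℂ :=
  (isHermitian_smul_cplx hz hΔ).cayley_mem_unitaryGroup

lemma cayleyDen_mul_cayleyOp (hΔ : Δ.IsHermitian) :
    cayleyDen Δ hz * cayleyOp Δ hz = cayleyNum Δ hz :=
  (isHermitian_smul_cplx hz hΔ).add_I_smul_one_mul_cayley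

lemma isUnit_det_diagPart_cayleyDen (Δ : Matrix (Fin n) (Fin n) ℝ) :
    IsUnit (diagPart (cayleyDen Δ hz)).det := by
  rw [diagPart, det_diagonal, isUnit_iff_ne_zero, Finset.prod_ne_zero_iff]
  intro i _ h
  simpa [cayleyDen, cplx] using congrArg Complex.im h

lemma jacobiScheme_succ (hΔ : Δ.IsHermitian) (K : ℕ) (f : Fin n → ℝ) (m : ℕ) :
    jacobiScheme Δ hz K f (m + 1) =
      cayleyOp Δ hz *ᵥ jacobiScheme Δ hz K f m -
        jacobiMatrix (cayleyDen Δ hz) ^ (K + 1) *ᵥ (cayleyOp Δ hz *ᵥ jacobiScheme Δ hz K f m) := by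
  rw [jacobiScheme, ← cayleyDen_mul_cayleyOp hz hΔ, ← mulVec_mulVec]
  exact jacobiIter_inv_diagPart_mulVec (isUnit_det_diagPart_cayleyDen hz Δ) _ K

end CayleyJacobi

lemma l2norm_mulVec_sub_sub_le {n : ℕ} {U P : Matrix (Fin n) (Fin n) ℂ}
    (hU : U ∈ unitaryGroup (Fin n) ℂ) (u y : Fin n → ℂ) :
    l2norm (U *ᵥ u - (U *ᵥ y - P *ᵥ (U *ᵥ y)))
      ≤ l2norm (u - y) + l2opNorm P * (l2norm u + l2norm (u - y)) := by
  have hy : l2norm y ≤ l2norm u + l2norm (u - y) := by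
    simpa only [sub_sub_cancel] using l2norm_sub_le u (u - y)
  calc _ = l2norm (U *ᵥ (u - y) + P *ᵥ (U *ᵥ y)) := by
        rw [mulVec_sub]; congr 1; abel
    _ ≤ l2norm (U *ᵥ (u - y)) + l2norm (P *ᵥ (U *ᵥ y)) := l2norm_add_le _ _
    _ ≤ l2norm (u - y) + l2opNorm P * l2norm y := by
      rw [l2norm_mulVec_of_mem_unitaryGroup hU, ← l2norm_mulVec_of_mem_unitaryGroup hU y]
      gcongr
      exact l2norm_mulVec_le P _
    _ ≤ _ := by gcongr; exact l2opNorm_nonneg P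

lemma div_le_div_add_mul_one_add_div {e e' t F : ℝ} (h : e' ≤ e + t * (F + e)) (ht : 0 ≤ t)
    (hF : 0 ≤ F) : e' / F ≤ e / F + t * (1 + e / F) :=
  calc e' / F ≤ (e + t * (F + e)) / F := div_le_div_of_nonneg_right h hF
    _ = e / F + t * (F / F + e / F) := by ring
    -- `F / F ≤ 1` also when `F = 0`, where all three quotients are `0`
    _ ≤ e / F + t * (1 + e / F) := by gcongr; exact div_self_le_one F

theorem jacobiScheme_error_recursion_general {n : ℕ} (Δ : Matrix (Fin n) (Fin n) ℝ)
    (hPSD : Δ.PosSemidef) (hz : ℝ) (K r : ℕ)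
    (f : Fin n → ℝ) :
    (∀ j : ℕ, l2norm (cayleyOp Δ hz ^ j *ᵥ fun i => (f i : ℂ)) = l2norm f) ∧
    (∀ j : ℕ, 1 ≤ j → j ≤ r →
      l2norm ((cayleyOp Δ hz ^ j *ᵥ fun i => (f i : ℂ)) - jacobiScheme Δ hz K f j) / l2norm f
        ≤ l2norm ((cayleyOp Δ hz ^ (j - 1) *ᵥ fun i => (f i : ℂ))
              - jacobiScheme Δ hz K f (j - 1)) / l2norm f
          + l2opNorm (jacobiMatrix (cayleyDen Δ hz) ^ (K + 1)) *
            (1 + l2norm ((cayleyOp Δ hz ^ (j - 1) *ᵥ fun i => (f i : ℂ))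
                    - jacobiScheme Δ hz K f (j - 1)) / l2norm f)) := by
  have hU := cayleyOp_mem_unitaryGroup hz hPSD.isHermitian
  have hpow (j : ℕ) : l2norm (cayleyOp Δ hz ^ j *ᵥ fun i => (f i : ℂ)) = l2norm f := by
    rw [l2norm_mulVec_of_mem_unitaryGroup (pow_mem hU j), l2norm_ofReal]
  refine ⟨hpow, fun j hj _ => ?_⟩
  obtain ⟨m, rfl⟩ := Nat.exists_eq_add_of_le' hj
  rw [Nat.add_sub_cancel]
  refine div_le_div_add_mul_one_add_div ?_ (l2opNorm_nonneg _) (l2norm_nonneg f)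
  rw [pow_succ', ← mulVec_mulVec, jacobiScheme_succ hz hPSD.isHermitian, ← hpow m]
  exact l2norm_mulVec_sub_sub_le hU _ _

/-- Since `C(hΔ)` is unitary, `‖C(hΔ)^j f‖₂ = ‖f‖₂` for all `j`, and the
relative errors `e_j = ‖C(hΔ)^j f − ỹ_j‖₂ / ‖f‖₂` of the Jacobi approximation scheme satisfy
`e_j ≤ e_{j−1} + ‖J^{K+1}‖₂ (1 + e_{j−1})` for each `j = 1, …, r`. -/
theorem jacobiScheme_error_recursion {n : ℕ} (Δ : Matrix (Fin n) (Fin n) ℝ)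
    (hPSD : Δ.PosSemidef) (hz : ℝ) (hhz : 0 < hz) (K r : ℕ)
    (f : Fin n → ℝ) (hf : f ≠ 0) :
    (∀ j : ℕ, l2norm (cayleyOp Δ hz ^ j *ᵥ fun i => (f i : ℂ)) = l2norm f) ∧
    (∀ j : ℕ, 1 ≤ j → j ≤ r →
      l2norm ((cayleyOp Δ hz ^ j *ᵥ fun i => (f i : ℂ)) - jacobiScheme Δ hz K f j) / l2norm f
        ≤ l2norm ((cayleyOp Δ hz ^ (j - 1) *ᵥ fun i => (f i : ℂ))
              - jacobiScheme Δ hz K f (j - 1)) / l2norm f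
          + l2opNorm (jacobiMatrix (cayleyDen Δ hz) ^ (K + 1)) *
            (1 + l2norm ((cayleyOp Δ hz ^ (j - 1) *ᵥ fun i => (f i : ℂ))
                    - jacobiScheme Δ hz K f (j - 1)) / l2norm f)) :=
  jacobiScheme_error_recursion_general Δ hPSD hz K r f

end
end

section
/- Let Δ be an n×n matrix whose off-diagonal entries vanish outside the edges of an undirected graph G (i.e., Δ_{lm} ≠ 0 with l ≠ m only if (l, m) is an edge of G), for instance a graph Laplacian. Let h > 0, let g_{c,h} be a Cayley filter of order r, and let G̃δ_m be the approximate Cayley filter output computed by the Jacobi approximation scheme with K iterations applied to the delta signal δ_m. Then G̃δ_m is supported in the r(K+1)-hop neighborhood N_{r(K+1),m} of m, i.e., (G̃δ_m)_l = 0 for every vertex l ∉ N_{r(K+1),m}. -/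
open Matrix Complex Finset

noncomputable section

/-!
Call a matrix hop-local if its off-diagonal entries live on edges of the graph. Multiplying a
signal by a hop-local matrix enlarges its support by at most one hop, and by a diagonal matrix
not at all. The matrices `hΔ ± iI` and the Jacobi matrix `J` are hop-local, so computing `ỹ_j`
from `ỹ_{j-1}` costs one hop for `hΔ − iI` and one for each of the `K` Jacobi sweeps.
-/

def IsHopLocal {ι R : Type*} [Zero R] (A : ι → ι → Prop) (M : Matrix ι ι R) : Prop :=
  ∀ l k, l ≠ k → ¬ A k l → M l k = 0

namespace IsHopLocal

variable {ι R : Type*} {A : ι → ι → Prop}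

lemma diagonal [Zero R] [DecidableEq ι] (d : ι → R) : IsHopLocal A (Matrix.diagonal d) :=
  fun _ _ hlk _ => diagonal_apply_ne d hlk

lemma one [Zero R] [One R] [DecidableEq ι] : IsHopLocal A (1 : Matrix ι ι R) :=
  fun _ _ hlk _ => one_apply_ne hlk

lemma add [AddZeroClass R] {M N : Matrix ι ι R} (hM : IsHopLocal A M) (hN : IsHopLocal A N) :
    IsHopLocal A (M + N) := fun l k hlk hA => by
  rw [Matrix.add_apply, hM l k hlk hA, hN l k hlk hA, add_zero]

lemma sub [SubtractionMonoid R] {M N : Matrix ι ι R} (hM : IsHopLocal A M)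
    (hN : IsHopLocal A N) : IsHopLocal A (M - N) := fun l k hlk hA => by
  rw [Matrix.sub_apply, hM l k hlk hA, hN l k hlk hA, sub_zero]

lemma neg [SubtractionMonoid R] {M : Matrix ι ι R} (hM : IsHopLocal A M) :
    IsHopLocal A (-M) := fun l k hlk hA => by
  rw [neg_apply, hM l k hlk hA, neg_zero]

lemma smul {S : Type*} [Zero R] [SMulZeroClass S R] {M : Matrix ι ι R} (hM : IsHopLocal A M)
    (a : S) : IsHopLocal A (a • M) := fun l k hlk hA => by
  rw [Matrix.smul_apply, hM l k hlk hA, smul_zero]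

lemma map {S : Type*} [Zero R] [Zero S] {M : Matrix ι ι R} (hM : IsHopLocal A M) {f : R → S}
    (hf : f 0 = 0) : IsHopLocal A (M.map f) := fun l k hlk hA => by
  rw [map_apply, hM l k hlk hA, hf]

lemma diagonal_mul [NonUnitalNonAssocSemiring R] [Fintype ι] [DecidableEq ι] {M : Matrix ι ι R}
    (hM : IsHopLocal A M) (d : ι → R) : IsHopLocal A (Matrix.diagonal d * M) :=
  fun l k hlk hA => by rw [Matrix.diagonal_mul, hM l k hlk hA, mul_zero]

end IsHopLocal

section HopLocality

variable {n : ℕ} {A : Fin n → Fin n → Prop} {Δ : Matrix (Fin n) (Fin n) ℝ}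

lemma IsHopLocal.cayleyNum (hΔ : IsHopLocal A Δ) (hz : ℝ) : IsHopLocal A (cayleyNum Δ hz) :=
  ((hΔ.map Complex.ofReal_zero).smul _).sub (IsHopLocal.one.smul _)

lemma IsHopLocal.cayleyDen (hΔ : IsHopLocal A Δ) (hz : ℝ) : IsHopLocal A (cayleyDen Δ hz) :=
  ((hΔ.map Complex.ofReal_zero).smul _).add (IsHopLocal.one.smul _)

lemma IsHopLocal.jacobiMatrix {M : Matrix (Fin n) (Fin n) ℂ} (hM : IsHopLocal A M) :
    IsHopLocal A (jacobiMatrix M) := by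
  rw [_root_.jacobiMatrix, diagPart, inv_diagonal, offPart, diagPart]
  exact ((hM.sub (.diagonal _)).diagonal_mul _).neg

end HopLocality

section Support

open Function

variable {ι R : Type*} [Fintype ι] [NonUnitalNonAssocSemiring R]

lemma support_diagonal_mulVec_subset [DecidableEq ι] (d v : ι → R) :
    support (diagonal d *ᵥ v) ⊆ support v := by
  intro x hx
  rw [mem_support, mulVec_diagonal] at hx
  exact right_ne_zero_of_mul hx

variable {n : ℕ} {A : Fin n → Fin n → Prop} {m : Fin n}

lemma khop_mono {s t : ℕ} (h : s ≤ t) : khop A s m ⊆ khop A t m := by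
  induction h with
  | refl => exact subset_rfl
  | step _ ih => exact ih.trans Set.subset_union_left

lemma support_mulVec_subset_khop_succ {M : Matrix (Fin n) (Fin n) R} (hM : IsHopLocal A M)
    {v : Fin n → R} {s : ℕ} (hv : support v ⊆ khop A s m) :
    support (M *ᵥ v) ⊆ khop A (s + 1) m := by
  rw [support_subset_iff']
  intro l hl
  change ∑ k, M l k * v k = 0
  refine Finset.sum_eq_zero fun k _ => ?_
  by_cases hk : k ∈ khop A s m
  · have hlk : l ≠ k := fun h => hl (Set.mem_union_left _ (h ▸ hk))
    have hA : ¬ A k l := fun h => hl (Set.mem_union_right _ ⟨k, hk, h⟩)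
    rw [hM l k hlk hA, zero_mul]
  · rw [support_subset_iff'.1 hv k hk, mul_zero]

lemma support_jacobiIter_subset {J : Matrix (Fin n) (Fin n) ℂ} (hJ : IsHopLocal A J)
    {b : Fin n → ℂ} {s : ℕ} (hb : support b ⊆ khop A s m) (k : ℕ) :
    support (jacobiIter J b k) ⊆ khop A (s + k) m := by
  induction k with
  | zero => exact hb
  | succ k ih =>
    exact (support_add (J *ᵥ jacobiIter J b k) b).trans <| Set.union_subset (support_mulVec_subset_khop_succ hJ ih)
      (hb.trans (khop_mono (by omega)))

variable {Δ : Matrix (Fin n) (Fin n) ℝ}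

lemma support_jacobiScheme_subset (hΔ : IsHopLocal A Δ) (hz : ℝ) (K : ℕ) {f : Fin n → ℝ}
    {s : ℕ} (hf : support f ⊆ khop A s m) (j : ℕ) :
    support (jacobiScheme Δ hz K f j) ⊆ khop A (s + j * (K + 1)) m := by
  induction j with
  | zero => simpa [jacobiScheme] using hf
  | succ j ih =>
    have hb : support ((diagPart (cayleyDen Δ hz))⁻¹ *ᵥ
        (cayleyNum Δ hz *ᵥ jacobiScheme Δ hz K f j)) ⊆ khop A (s + j * (K + 1) + 1) m := by
      rw [diagPart, inv_diagonal]
      exact (support_diagonal_mulVec_subset _ _).trans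
        (support_mulVec_subset_khop_succ (hΔ.cayleyNum hz) ih)
    have h := support_jacobiIter_subset (hΔ.cayleyDen hz).jacobiMatrix hb K
    rwa [show s + j * (K + 1) + 1 + K = s + (j + 1) * (K + 1) by ring] at h

lemma support_approxCayley_subset (hΔ : IsHopLocal A Δ) (hz : ℝ) (r : ℕ) (c₀ : ℝ) (c : ℕ → ℂ)
    (K : ℕ) {f : Fin n → ℝ} {s : ℕ} (hf : support f ⊆ khop A s m) :
    support (approxCayley Δ hz r c₀ c K f) ⊆ khop A (s + r * (K + 1)) m := by
  rw [support_subset_iff']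
  intro l hl
  have hfl : f l = 0 :=
    support_subset_iff'.1 (hf.trans (khop_mono (Nat.le_add_right _ _))) l hl
  have hy : ∀ j ∈ Finset.Icc 1 r, jacobiScheme Δ hz K f j l = 0 := fun j hj =>
    support_subset_iff'.1 (support_jacobiScheme_subset hΔ hz K hf j) l fun h =>
      hl (khop_mono (by gcongr; exact (Finset.mem_Icc.1 hj).2) h)
  rw [approxCayley, hfl, Finset.sum_eq_zero fun j hj => by rw [hy j hj, mul_zero]]
  simp

end Support

theorem approxCayley_delta_support_general {n : ℕ} (Δ : Matrix (Fin n) (Fin n) ℝ)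
    (A : Fin n → Fin n → Prop) (hAsym : ∀ l m, A l m → A m l)
    (hsupp : ∀ l m, l ≠ m → Δ l m ≠ 0 → A l m)
    (hz : ℝ) (r : ℕ) (c₀ : ℝ) (c : ℕ → ℂ) (K : ℕ) (m : Fin n) :
    ∀ l : Fin n, l ∉ khop A (r * (K + 1)) m →
      approxCayley Δ hz r c₀ c K (deltaSig m) l = 0 := by
  have hΔ : IsHopLocal A Δ := fun l k hlk hA =>
    not_not.1 fun h => hA (hAsym l k (hsupp l k hlk h))
  have hδ : Function.support (deltaSig m) ⊆ khop A 0 m := fun l hl => by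
    by_contra h
    exact hl (if_neg h)
  simpa only [zero_add] using
    Function.support_subset_iff'.1 (support_approxCayley_subset hΔ hz r c₀ c K hδ)

/-- If the off-diagonal entries of `Δ` vanish outside the edges of an
undirected graph, then the approximate Cayley filter output `G̃δ_m` computed by the Jacobi
scheme with `K` iterations is supported in the `r(K+1)`-hop neighborhood of `m`. -/
theorem approxCayley_delta_support {n : ℕ} (Δ : Matrix (Fin n) (Fin n) ℝ)
    (A : Fin n → Fin n → Prop) (hAsym : ∀ l m, A l m → A m l)
    (hsupp : ∀ l m, l ≠ m → Δ l m ≠ 0 → A l m)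
    (hz : ℝ) (hhz : 0 < hz) (r : ℕ) (c₀ : ℝ) (c : ℕ → ℂ) (K : ℕ) (m : Fin n) :
    ∀ l : Fin n, l ∉ khop A (r * (K + 1)) m →
      approxCayley Δ hz r c₀ c K (deltaSig m) l = 0 :=
  approxCayley_delta_support_general Δ A hAsym hsupp hz r c₀ c K m

end
end

section
/- Any spectral filter can be formulated as a Cayley filter: let h > 0, let λ₁, …, λₙ be distinct nonnegative real numbers, and let v₁, …, vₙ be arbitrary real values. Then there exist an order r ∈ ℕ and coefficients c₀ ∈ ℝ, c₁, …, c_r ∈ ℂ such that the Cayley polynomial g_{c,h}(λ) = c₀ + 2 Re{ Σ_{j=1}^r c_j (hλ − i)^j (hλ + i)^{−j} } satisfies g_{c,h}(λ_k) = v_k for every k = 1, …, n. -/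
open Matrix Complex Finset

noncomputable section

/-- A Cayley polynomial of order `r` with spectral zoom `h`:
`g_{c,h}(λ) = c₀ + 2 Re { Σ_{j=1}^r c_j (hλ − i)^j (hλ + i)^{−j} }`. -/
def cayleyPoly (hz : ℝ) (r : ℕ) (c₀ : ℝ) (c : ℕ → ℂ) (lam : ℝ) : ℝ :=
  c₀ + 2 * (∑ j ∈ Finset.Icc 1 r,
      c j * ((hz * lam : ℝ) - Complex.I) ^ j * ((((hz * lam : ℝ) : ℂ) + Complex.I)⁻¹) ^ j).re

theorem cayleyPoly_interpolation' {n : ℕ} (hz : ℝ) (hhz : 0 < hz)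
    (lam : Fin n → ℝ) (hinj : Function.Injective lam) (hnn : ∀ k, 0 ≤ lam k)
    (v : Fin n → ℝ) :
    ∃ (r : ℕ) (c₀ : ℝ) (c : ℕ → ℂ), ∀ k,
      (c₀ + 2 * (∑ j ∈ Finset.Icc 1 r,
        c j * ((hz * lam k : ℝ) - Complex.I) ^ j *
        ((((hz * lam k : ℝ) : ℂ) + Complex.I)⁻¹) ^ j).re) = v k := by
  set z : Fin n → ℂ := fun k =>
    (((hz * lam k : ℝ) : ℂ) - Complex.I) * ((((hz * lam k : ℝ) : ℂ) + Complex.I)⁻¹) with hzdef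
  have hden : ∀ k, (((hz * lam k : ℝ) : ℂ) + Complex.I) ≠ 0 := by
    intro k h
    have := congrArg Complex.im h
    simp at this
  have hzinj : Function.Injective z := by
    intro a b hab
    apply hinj
    have ha := hden a; have hb := hden b
    have hab' : (((hz * lam a : ℝ) : ℂ) - Complex.I) / (((hz * lam a : ℝ) : ℂ) + Complex.I)
        = (((hz * lam b : ℝ) : ℂ) - Complex.I) / (((hz * lam b : ℝ) : ℂ) + Complex.I) := by
      simpa [z, div_eq_mul_inv] using hab
    rw [div_eq_div_iff ha hb] at hab'
    have him := congrArg Complex.im hab'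
    simp [Complex.mul_im, Complex.sub_im, Complex.sub_re, Complex.add_im, Complex.add_re] at him
    have : hz * lam a = hz * lam b := by linarith
    exact mul_left_cancel₀ (ne_of_gt hhz) this
  -- interpolating polynomial
  set p : Polynomial ℂ := Lagrange.interpolate Finset.univ z (fun k => (v k : ℂ)) with hp
  have heval : ∀ k, p.eval (z k) = (v k : ℂ) := fun k =>
    Lagrange.eval_interpolate_at_node _ (hzinj.injOn) (Finset.mem_univ k)
  have hdeg : p.natDegree < n + 1 := by
    have h1 : p.degree < ((Finset.univ : Finset (Fin n)).card : ℕ∞) :=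
      Lagrange.degree_interpolate_lt _ hzinj.injOn
    rw [Finset.card_univ, Fintype.card_fin] at h1
    have : p.degree ≤ (n : ℕ∞) := le_of_lt h1
    exact Nat.lt_succ_of_le (Polynomial.natDegree_le_iff_degree_le.mpr this)
  refine ⟨n, (p.coeff 0).re, fun j => p.coeff j / 2, fun k => ?_⟩
  have hev : p.eval (z k) = p.coeff 0 + ∑ j ∈ Finset.Icc 1 n, p.coeff j * z k ^ j := by
    rw [Polynomial.eval_eq_sum_range' hdeg]
    have hrange : Finset.range (n + 1) = Finset.Icc 0 n := by
      rw [Finset.range_eq_Ico]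
      rfl
    rw [hrange, ← Finset.add_sum_erase _ _ (Finset.mem_Icc.mpr ⟨le_refl 0, Nat.zero_le n⟩)]
    rw [Finset.Icc_erase_left, ← Finset.Icc_add_one_left_eq_Ioc]
    simp
  have hre : (v k : ℂ).re = v k := rfl
  have key : ∀ j, (p.coeff j / 2) * (((hz * lam k : ℝ) : ℂ) - Complex.I) ^ j *
      ((((hz * lam k : ℝ) : ℂ) + Complex.I)⁻¹) ^ j = (p.coeff j / 2) * z k ^ j := by
    intro j
    rw [hzdef, mul_pow, mul_assoc]
  calc (p.coeff 0).re + 2 * (∑ j ∈ Finset.Icc 1 n,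
        (p.coeff j / 2) * (((hz * lam k : ℝ) : ℂ) - Complex.I) ^ j *
        ((((hz * lam k : ℝ) : ℂ) + Complex.I)⁻¹) ^ j).re
      = (p.coeff 0).re + 2 * ((2 : ℂ)⁻¹ * ∑ j ∈ Finset.Icc 1 n, p.coeff j * z k ^ j).re := by
        congr 2
        rw [Finset.mul_sum]
        exact congrArg Complex.re (Finset.sum_congr rfl fun j _ => by rw [key j]; ring)
    _ = (p.coeff 0 + ∑ j ∈ Finset.Icc 1 n, p.coeff j * z k ^ j).re := by
        simp [Complex.add_re, Complex.mul_re]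
    _ = v k := by rw [← hev, heval k]; simp

/-- Any spectral filter can be formulated as a Cayley filter: given `h > 0`,
distinct nonnegative reals `λ₁, …, λₙ` and arbitrary real values `v₁, …, vₙ`, there are an order
`r` and coefficients `c₀ ∈ ℝ`, `c₁, …, c_r ∈ ℂ` with `g_{c,h}(λ_k) = v_k` for all `k`. -/
theorem cayleyPoly_interpolation {n : ℕ} (hz : ℝ) (hhz : 0 < hz)
    (lam : Fin n → ℝ) (hinj : Function.Injective lam) (hnn : ∀ k, 0 ≤ lam k)
    (v : Fin n → ℝ) :
    ∃ (r : ℕ) (c₀ : ℝ) (c : ℕ → ℂ), ∀ k, cayleyPoly hz r c₀ c (lam k) = v k := by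
  obtain ⟨r, c₀, c, h⟩ := cayleyPoly_interpolation' hz hhz lam hinj hnn v
  exact ⟨r, c₀, c, fun k => by simpa [cayleyPoly] using h k⟩

end
end
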